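/- arXiv:2208.06922 — 2 statements merged into one kernel-verified Lean document; each statement's English description precedes it below -/
import Mathlib

section
/- There is a constant C such that for all integers n \ge 3, \omega(n) \le (\log n / \log\log n)(1 + C/\log\log n), where \omega(n) is the number of distinct prime divisors of n. -/
/-!
For `x = log n`, every prime factor `p` of `n` satisfies
`log x ≤ log p + max 0 (log x - log p)`, so
`ω(n) log x ≤ log n + ∑_{p ≤ x} log (x / p) = log n + π(x) log x - θ(x)`.
By Abel summation the last difference is `∫₂ˣ π(t) / t dt`, and Chebyshev's bound
`π(t) ≪ t / log t` makes it `O(x / log x)`; dividing by `log x = log log n` gives the claim.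
-/

open Real Finset Chebyshev MeasureTheory
open scoped Nat.Prime

theorem sum_log_primeFactors_le_log (n : ℕ) : ∑ p ∈ n.primeFactors, log p ≤ log n := by
  rcases eq_or_ne n 0 with rfl | hn
  · simp
  have hpos : ∀ p ∈ n.primeFactors, (0 : ℝ) < p :=
    fun p hp ↦ Nat.cast_pos.mpr (Nat.prime_of_mem_primeFactors hp).pos
  rw [← log_prod fun p hp ↦ (hpos p hp).ne']
  refine log_le_log (prod_pos hpos) ?_
  rw [← Nat.cast_prod]
  exact_mod_cast Nat.le_of_dvd (Nat.pos_of_ne_zero hn) n.prod_primeFactors_dvd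

theorem sum_primesLE_log_sub_log_eq (x : ℝ) :
    ∑ p ∈ Nat.primesLE ⌊x⌋₊, (log x - log p) = π ⌊x⌋₊ * log x - θ x := by
  rw [sum_sub_distrib, sum_const, Nat.primesLE_card_eq_primeCounting, nsmul_eq_mul,
    theta_eq_theta_coe_floor, theta_eq_sum_primesLE_log]

theorem card_primeFactors_mul_log_le (n : ℕ) {x : ℝ} (hx : 0 < x) :
    #n.primeFactors * log x ≤ log n + (π ⌊x⌋₊ * log x - θ x) := by
  have hsplit : ∀ p ∈ n.primeFactors,
      log x ≤ log p + if (p : ℝ) ≤ x then log x - log p else 0 := by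
    intro p hp
    split_ifs with hpx
    · linarith
    · have := log_le_log hx (not_le.mp hpx).le
      linarith
  have hsmall :
      n.primeFactors.filter (fun p : ℕ ↦ (p : ℝ) ≤ x) ⊆ Nat.primesLE ⌊x⌋₊ := by
    intro p hp
    rw [mem_filter, Nat.mem_primeFactors] at hp
    exact Nat.mem_primesLE.mpr ⟨Nat.le_floor hp.2, hp.1.1⟩
  have hnonneg : ∀ p ∈ Nat.primesLE ⌊x⌋₊, 0 ≤ log x - log p := by
    intro p hp
    have hp0 : (0 : ℝ) < p := Nat.cast_pos.mpr (Nat.prime_of_mem_primesLE hp).pos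
    have hpx : (p : ℝ) ≤ x := (Nat.le_floor_iff hx.le).mp (Nat.le_of_mem_primesLE hp)
    linarith [log_le_log hp0 hpx]
  calc (#n.primeFactors : ℝ) * log x = ∑ _p ∈ n.primeFactors, log x := by simp
    _ ≤ ∑ p ∈ n.primeFactors, (log p + if (p : ℝ) ≤ x then log x - log p else 0) :=
      sum_le_sum hsplit
    _ = ∑ p ∈ n.primeFactors, log p
        + ∑ p ∈ n.primeFactors.filter (fun p : ℕ ↦ (p : ℝ) ≤ x), (log x - log p) := by
      rw [sum_add_distrib, sum_filter]
    _ ≤ log n + ∑ p ∈ Nat.primesLE ⌊x⌋₊, (log x - log p) :=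
      add_le_add (sum_log_primeFactors_le_log n)
        (sum_le_sum_of_subset_of_nonneg hsmall fun p hp _ ↦ hnonneg p hp)
    _ = log n + (π ⌊x⌋₊ * log x - θ x) := by rw [sum_primesLE_log_sub_log_eq]

theorem sqrt_le_two_mul_div_log {x : ℝ} (hx : 1 < x) : √x ≤ 2 * x / log x := by
  have hx0 : 0 < x := by linarith
  have hlog : log x ≤ 2 * √x := by
    have := log_le_sub_one_of_pos (sqrt_pos.mpr hx0)
    rw [log_sqrt hx0.le] at this
    linarith
  rw [le_div_iff₀ (log_pos hx)]
  nlinarith [mul_self_sqrt hx0.le, sqrt_nonneg x]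

theorem primeCounting_floor_le_mul_div_log {x : ℝ} (hx : 1 < x) :
    (π ⌊x⌋₊ : ℝ) ≤ 5 * x / log x := by
  have hlog := log_pos hx
  have hlog4 : log 4 < 3 / 2 := by
    rw [show (4 : ℝ) = 2 ^ 2 by norm_num, log_pow, Nat.cast_ofNat]
    linarith [log_two_lt_d9]
  calc (π ⌊x⌋₊ : ℝ) ≤ log 4 * x / log √x + √x := pi_le_log4_mul_div hx
    _ ≤ log 4 * x / log √x + 2 * x / log x := by gcongr; exact sqrt_le_two_mul_div_log hx
    _ = (2 * log 4 + 2) * x / log x := by rw [log_sqrt (by linarith)]; field_simp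
    _ ≤ 5 * x / log x := by gcongr; linarith

theorem intervalIntegrable_one_div_log {a b : ℝ} (ha : 1 < a) (hb : 1 < b) :
    IntervalIntegrable (fun t ↦ 1 / log t) volume a b := by
  refine ContinuousOn.intervalIntegrable fun t ht ↦ ContinuousAt.continuousWithinAt ?_
  rw [Set.mem_uIcc] at ht
  have : t ≠ 0 := by grind
  have : log t ≠ 0 := (log_pos (by grind)).ne'
  fun_prop (disch := assumption)

theorem integral_one_div_log_le_of_le {a b : ℝ} (ha : 1 < a) (hab : a ≤ b) :
    ∫ t in a..b, 1 / log t ≤ (b - a) / log a := by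
  calc ∫ t in a..b, 1 / log t ≤ ∫ _ in a..b, 1 / log a :=
        intervalIntegral.integral_mono_on hab (intervalIntegrable_one_div_log ha (by linarith))
          intervalIntegrable_const fun t ht ↦ by
            gcongr
            · exact log_pos ha
            · exact ht.1
    _ = (b - a) / log a := by simp [div_eq_mul_inv]

theorem integral_one_div_log_le {x : ℝ} (hx : 2 ≤ x) :
    ∫ t in 2..x, 1 / log t ≤ 5 * x / log x := by
  have hx0 : 0 < x := by linarith
  have hlog : 0 < log x := log_pos (by linarith)
  set s := max 2 √x
  have hs2 : 2 ≤ s := le_max_left _ _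
  have hsx : s ≤ x := max_le hx ((sqrt_le_left hx0.le).mpr (by nlinarith))
  have hlogs : log x / 2 ≤ log s := by
    rw [← log_sqrt hx0.le]
    exact log_le_log (sqrt_pos.mpr hx0) (le_max_right _ _)
  have hlog2 : 0.69 < log 2 := lt_trans (by norm_num) log_two_gt_d9
  rw [← intervalIntegral.integral_add_adjacent_intervals (b := s)
    (intervalIntegrable_one_div_log (by norm_num) (by linarith))
    (intervalIntegrable_one_div_log (by linarith) (by linarith))]
  calc (∫ t in 2..s, 1 / log t) + ∫ t in s..x, 1 / log t
      ≤ (s - 2) / log 2 + (x - s) / log s :=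
        add_le_add (integral_one_div_log_le_of_le (by norm_num) hs2)
          (integral_one_div_log_le_of_le (by linarith) hsx)
    _ ≤ √x / log 2 + 2 * x / log x := by
        apply add_le_add
        · gcongr
          linarith [max_le_add_of_nonneg (a := 2) (b := √x) (by norm_num) (sqrt_nonneg x)]
        · rw [div_le_div_iff₀ (by linarith) hlog]
          nlinarith
    _ ≤ (2 * x / log x) / log 2 + 2 * x / log x := by
        gcongr
        exact sqrt_le_two_mul_div_log (by linarith)
    _ = (2 / log 2 + 2) * x / log x := by ring
    _ ≤ 5 * x / log x := by
        gcongr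
        rw [div_add' _ _ _ (by positivity), div_le_iff₀ (by positivity)]
        linarith

theorem primeCounting_mul_log_sub_theta_le {x : ℝ} (hx : 1 < x) :
    π ⌊x⌋₊ * log x - θ x ≤ 25 * x / log x := by
  have hlog : 0 < log x := log_pos hx
  rcases lt_or_ge x 2 with hx2 | hx2
  · have hfloor : ⌊x⌋₊ = 1 :=
      (Nat.floor_eq_iff (by linarith)).mpr ⟨by norm_num; linarith, by norm_num; linarith⟩
    rw [hfloor, theta_eq_zero_of_lt_two hx2]
    simp only [Nat.primeCounting_one, Nat.cast_zero, zero_mul, sub_zero]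
    positivity
  have hint : IntervalIntegrable (fun t ↦ (π ⌊t⌋₊ : ℝ) / t) volume 2 x := by
    have hmono : Monotone fun t : ℝ ↦ (π ⌊t⌋₊ : ℝ) :=
      fun a b hab ↦ Nat.cast_le.mpr (Nat.monotone_primeCounting (Nat.floor_mono hab))
    simp_rw [div_eq_mul_inv]
    refine hmono.intervalIntegrable.mul_continuousOn (continuousOn_inv₀.mono fun t ht ↦ ?_)
    grind [Set.mem_uIcc]
  rw [theta_eq_primeCounting_mul_log_sub_integral hx2, sub_sub_cancel]
  calc ∫ t in 2..x, (π ⌊t⌋₊ : ℝ) / t ≤ ∫ t in 2..x, 5 * (1 / log t) :=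
        intervalIntegral.integral_mono_on hx2 hint
          ((intervalIntegrable_one_div_log (by norm_num) (by linarith)).const_mul 5) fun t ht ↦ by
            have ht1 : 1 < t := by linarith [ht.1]
            rw [div_le_iff₀ (by linarith), mul_one_div, div_mul_eq_mul_div]
            exact primeCounting_floor_le_mul_div_log ht1
    _ = 5 * ∫ t in 2..x, 1 / log t := intervalIntegral.integral_const_mul _ _
    _ ≤ 5 * (5 * x / log x) := by gcongr; exact integral_one_div_log_le hx2
    _ = 25 * x / log x := by ring

theorem omega_upper_bound :
    ∃ C : ℝ, ∀ n : ℕ, 3 ≤ n →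
      (n.primeFactors.card : ℝ) ≤
        (Real.log n / Real.log (Real.log n)) * (1 + C / Real.log (Real.log n)) := by
  refine ⟨25, fun n hn ↦ ?_⟩
  set X := log n
  have h3 : (3 : ℝ) ≤ n := by exact_mod_cast hn
  have hX : 1 < X := by
    rw [← exp_lt_exp, exp_log (by positivity)]
    exact exp_one_lt_d9.trans_le (by linarith)
  have hL : 0 < log X := log_pos hX
  have key : #n.primeFactors * log X ≤ X + 25 * X / log X :=
    (card_primeFactors_mul_log_le n (by linarith)).trans
      (add_le_add_right (primeCounting_mul_log_sub_theta_le hX) X)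
  rw [← le_div_iff₀ hL] at key
  calc (#n.primeFactors : ℝ) ≤ (X + 25 * X / log X) / log X := key
    _ = X / log X * (1 + 25 / log X) := by field_simp
end

section
/- Let k be real and let Q = \sum_{r=0}^{\ell} (kP)^r / r! where P is a complex number with |kP| > A/(1-1/k) for k < 0 and A = \alpha^{-3/4}. Then |Q| \le |(k-1) e^{(e(1-1/k))^{-1}} \alpha^{3/4} P|^{\ell}, provided \ell \ge e^2 \alpha^{-3/4}. -/
open Finset

theorem norm_sum_range_pow_div_factorial_le {𝕜 : Type*} [RCLike 𝕜] (z : 𝕜) (n : ℕ) :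
    ‖∑ r ∈ range n, z ^ r / (r.factorial : 𝕜)‖ ≤ ∑ r ∈ range n, ‖z‖ ^ r / (r.factorial : ℝ) :=
  (norm_sum_le _ _).trans_eq <| sum_congr rfl fun r _ => by
    rw [norm_div, norm_pow, RCLike.norm_natCast]

/-- Once `c ≤ x`, each term `x ^ r / r!` with `r ≤ ℓ` is at most `(x / c) ^ ℓ * c ^ r / r!`. -/
theorem sum_range_pow_div_factorial_le_div_pow_mul_exp {x c : ℝ} (hc : 0 < c) (hcx : c ≤ x)
    (ℓ : ℕ) :
    ∑ r ∈ range (ℓ + 1), x ^ r / (r.factorial : ℝ) ≤ (x / c) ^ ℓ * Real.exp c := by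
  have hxc : 1 ≤ x / c := (one_le_div hc).mpr hcx
  calc ∑ r ∈ range (ℓ + 1), x ^ r / (r.factorial : ℝ)
      ≤ ∑ r ∈ range (ℓ + 1), (x / c) ^ ℓ * (c ^ r / r.factorial) := by
        refine sum_le_sum fun r hr => ?_
        have hrℓ : r ≤ ℓ := Nat.lt_succ_iff.mp (mem_range.mp hr)
        have hx : x ^ r = (x / c) ^ r * c ^ r := by rw [← mul_pow, div_mul_cancel₀ x hc.ne']
        rw [hx, mul_div_assoc]
        gcongr
    _ ≤ (x / c) ^ ℓ * Real.exp c := by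
        rw [← mul_sum]
        gcongr
        exact Real.sum_le_exp_of_nonneg hc.le _

theorem Real.exp_le_exp_inv_pow {a c : ℝ} (ha : 0 < a) {ℓ : ℕ} (h : a * c ≤ ℓ) :
    Real.exp c ≤ Real.exp a⁻¹ ^ ℓ := by
  rw [← Real.exp_nat_mul, Real.exp_le_exp, ← div_eq_mul_inv, le_div_iff₀ ha, mul_comm]
  exact h

theorem truncated_exp_Q_bound_general (k α : ℝ) (hk : k < 0) (hα0 : 0 < α)
    (ℓ : ℕ) (hℓ : Real.exp 1 ^ 2 * α ^ (-(3 / 4) : ℝ) ≤ (ℓ : ℝ)) (P : ℂ)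
    (h : α ^ (-(3 / 4) : ℝ) / (1 - 1 / k) < ‖(k : ℂ) * P‖) :
    ‖∑ r ∈ Finset.range (ℓ + 1), ((k : ℂ) * P) ^ r / (Nat.factorial r : ℂ)‖ ≤
      ‖((((k - 1) * Real.exp ((Real.exp 1 * (1 - 1 / k))⁻¹) * α ^ ((3 : ℝ) / 4) : ℝ)) : ℂ)
          * P‖ ^ ℓ := by
  set A := α ^ (-(3 / 4) : ℝ)
  set s := 1 - 1 / k
  set E := Real.exp ((Real.exp 1 * s)⁻¹)
  have hA : 0 < A := by positivity
  have hs : 0 < s := by have := one_div_neg.mpr hk; linarith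
  have hexp : Real.exp (A / s) ≤ E ^ ℓ := by
    refine Real.exp_le_exp_inv_pow (by positivity) ?_
    have he : 1 ≤ Real.exp 1 := Real.one_le_exp zero_le_one
    calc Real.exp 1 * s * (A / s) = Real.exp 1 * A := by field_simp
      _ ≤ Real.exp 1 ^ 2 * A := by gcongr; nlinarith
      _ ≤ ℓ := hℓ
  -- `|k| * (1 - 1 / k) = |k - 1|` because `k < 0`.
  have hratio : ‖(k : ℂ) * P‖ / (A / s) * E =
      ‖((((k - 1) * E * α ^ ((3 : ℝ) / 4) : ℝ)) : ℂ) * P‖ := by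
    have htA : α ^ ((3 : ℝ) / 4) = A⁻¹ := by
      simp only [A]; rw [Real.rpow_neg hα0.le, inv_inv]
    have hk1 : (k - 1) * E * A⁻¹ < 0 :=
      mul_neg_of_neg_of_pos (mul_neg_of_neg_of_pos (by linarith) (Real.exp_pos _)) (by positivity)
    rw [htA, norm_mul, norm_mul, Complex.norm_real, Complex.norm_real, Real.norm_eq_abs,
      Real.norm_eq_abs, abs_of_neg hk, abs_of_neg hk1]
    simp only [s]
    field_simp [hk.ne]
  calc _ ≤ ∑ r ∈ range (ℓ + 1), ‖(k : ℂ) * P‖ ^ r / (r.factorial : ℝ) :=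
        norm_sum_range_pow_div_factorial_le _ _
    _ ≤ (‖(k : ℂ) * P‖ / (A / s)) ^ ℓ * Real.exp (A / s) :=
        sum_range_pow_div_factorial_le_div_pow_mul_exp (by positivity) h.le ℓ
    _ ≤ (‖(k : ℂ) * P‖ / (A / s)) ^ ℓ * E ^ ℓ := by gcongr
    _ = _ := by rw [← mul_pow, hratio]

theorem truncated_exp_Q_bound (k α : ℝ) (hk : k < 0) (hα0 : 0 < α) (hα1 : α < 1)
    (ℓ : ℕ) (hℓ : Real.exp 1 ^ 2 * α ^ (-(3 / 4) : ℝ) ≤ (ℓ : ℝ)) (P : ℂ)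
    (h : α ^ (-(3 / 4) : ℝ) / (1 - 1 / k) < ‖(k : ℂ) * P‖) :
    ‖∑ r ∈ Finset.range (ℓ + 1), ((k : ℂ) * P) ^ r / (Nat.factorial r : ℂ)‖ ≤
      ‖((((k - 1) * Real.exp ((Real.exp 1 * (1 - 1 / k))⁻¹) * α ^ ((3 : ℝ) / 4) : ℝ)) : ℂ)
          * P‖ ^ ℓ :=
  truncated_exp_Q_bound_general k α hk hα0 ℓ hℓ P h
end
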